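/- The map F is Lipschitz from 𝒮 to ℓ¹: there exists a constant C₁ ∈ (0,∞), depending only on L, k and λ, such that for all r, r̃ ∈ 𝒮, ‖F(r) − F(r̃)‖₁ ≤ C₁ · ‖r − r̃‖₁. -/

import Mathlib

noncomputable section

open scoped BigOperators

/-- Tail sum `Σ_{m=j+1}^∞ r m`. -/
def tsumTail (r : ℕ → ℝ) (j : ℕ) : ℝ := ∑' m : ℕ, r (j + 1 + m)

/-- Membership in `𝒮`: nonnegative summable sequences with total mass 1. -/
def memS (r : ℕ → ℝ) : Prop := (∀ j, 0 ≤ r j) ∧ Summable r ∧ ∑' j, r j = 1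

/-- The function `ζ̄(j, r)`. -/
def zbar (L k : ℕ) (j : ℕ) (r : ℕ → ℝ) : ℝ :=
  ∑ i₁ ∈ Finset.range k,
    ((∑ m ∈ Finset.range j, r m) ^ i₁ / (i₁.factorial : ℝ)) *
      ∑ i₂ ∈ Finset.Icc 1 (L - i₁),
        (min i₂ (k - i₁) : ℝ) * (r j ^ i₂ / (i₂.factorial : ℝ)) *
          ((tsumTail r j) ^ (L - i₁ - i₂) / ((L - i₁ - i₂).factorial : ℝ))

/-- The drift map `F`, defined coordinatewise:
`F_j(r) = λ·L!·(ζ̄(j−1,r) − ζ̄(j,r)) + k·(r_{j+1} − r_j)` for `j ≥ 1` and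
`F_0(r) = −λ·L!·ζ̄(0,r) + k·r_1`. -/
def Fmap (L k : ℕ) (lam : ℝ) (r : ℕ → ℝ) : ℕ → ℝ
  | 0 => -(lam * (L.factorial : ℝ)) * zbar L k 0 r + (k : ℝ) * r 1
  | (j + 1) => lam * (L.factorial : ℝ) * (zbar L k j r - zbar L k (j + 1) r)
      + (k : ℝ) * (r (j + 2) - r (j + 1))

lemma aux_pow_diff (x y : ℝ) (hx0 : 0 ≤ x) (hx1 : x ≤ 1) (hy0 : 0 ≤ y) (hy1 : y ≤ 1) (n : ℕ) :
    |x ^ n - y ^ n| ≤ n * |x - y| := by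
  induction n with
  | zero => simp
  | succ n ih =>
      have h : x ^ (n+1) - y ^ (n+1) = x ^ n * (x - y) + y * (x ^ n - y ^ n) := by ring
      calc |x ^ (n+1) - y ^ (n+1)| ≤ |x ^ n * (x - y)| + |y * (x ^ n - y ^ n)| := by
            rw [h]; exact abs_add_le _ _
        _ ≤ 1 * |x - y| + 1 * (n * |x - y|) := by
            rw [abs_mul, abs_mul]
            gcongr
            · rw [abs_of_nonneg (pow_nonneg hx0 n)]
              exact pow_le_one₀ hx0 hx1
            · rw [abs_of_nonneg hy0]; exact hy1
        _ = (n+1 : ℕ) * |x - y| := by push_cast; ring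

lemma aux_prod3 (a b c a' b' c' : ℝ) (hb : 0 ≤ b) (hc : 0 ≤ c) (ha' : 0 ≤ a') (hb' : 0 ≤ b') :
    |a*b*c - a'*b'*c'| ≤ |a - a'| * (b*c) + |b - b'| * (a'*c) + |c - c'| * (a'*b') := by
  have h : a*b*c - a'*b'*c' = (a-a')*(b*c) + (b-b')*(a'*c) + (c-c')*(a'*b') := by ring
  calc |a*b*c - a'*b'*c'| ≤ |(a-a')*(b*c) + (b-b')*(a'*c)| + |(c-c')*(a'*b')| := by
        rw [h]; exact abs_add_le _ _
    _ ≤ |(a-a')*(b*c)| + |(b-b')*(a'*c)| + |(c-c')*(a'*b')| := by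
        gcongr; exact abs_add_le _ _
    _ = |a - a'| * (b*c) + |b - b'| * (a'*c) + |c - c'| * (a'*b') := by
        simp only [abs_mul, abs_of_nonneg hb, abs_of_nonneg hc, abs_of_nonneg ha',
          abs_of_nonneg hb']

lemma memS.nonneg {r : ℕ → ℝ} (hr : memS r) (j : ℕ) : 0 ≤ r j := hr.1 j

lemma memS.coord_le_one {r : ℕ → ℝ} (hr : memS r) (j : ℕ) : r j ≤ 1 := by
  have := Summable.le_tsum hr.2.1 j (fun i _ => hr.1 i)
  rwa [hr.2.2] at this

lemma memS.sum_range_le_one {r : ℕ → ℝ} (hr : memS r) (n : ℕ) :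
    ∑ m ∈ Finset.range n, r m ≤ 1 := by
  have := Summable.sum_le_tsum (Finset.range n) (fun i _ => hr.1 i) hr.2.1
  rwa [hr.2.2] at this

lemma tsumTail_eq {r : ℕ → ℝ} (hr : memS r) (j : ℕ) :
    tsumTail r j = 1 - ∑ m ∈ Finset.range (j+1), r m := by
  have h := hr.2.1.sum_add_tsum_nat_add (j+1)
  rw [hr.2.2] at h
  unfold tsumTail
  have e : (fun m => r (j + 1 + m)) = fun m => r (m + (j + 1)) :=
    funext fun m => by rw [add_comm]
  rw [e]
  linarith

lemma zbar_diff (L k : ℕ) (hk : 1 ≤ k) (hkL : k ≤ L) (j : ℕ) (r rt : ℕ → ℝ)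
    (hr : memS r) (hrt : memS rt) :
    |zbar L k j r - zbar L k j rt| ≤
      (k : ℝ)^2 * (L : ℝ)^2 *
        (|r j - rt j| + (∑' i, |r i - rt i|) * (r j + rt j)) := by
  set D := ∑' i, |r i - rt i| with hD
  have hd : Summable (fun i => |r i - rt i|) := (hr.2.1.sub hrt.2.1).abs
  have hD0 : 0 ≤ D := tsum_nonneg fun _ => abs_nonneg _
  set A := ∑ m ∈ Finset.range j, r m with hA
  set At := ∑ m ∈ Finset.range j, rt m with hAt
  set B := tsumTail r j with hB
  set Bt := tsumTail rt j with hBt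
  set x := r j
  set xt := rt j
  have hsum_diff : ∀ n : ℕ,
      |(∑ m ∈ Finset.range n, r m) - ∑ m ∈ Finset.range n, rt m| ≤ D := by
    intro n
    rw [← Finset.sum_sub_distrib]
    exact (Finset.abs_sum_le_sum_abs _ _).trans
      (Summable.sum_le_tsum _ (fun _ _ => abs_nonneg _) hd)
  have hAd : |A - At| ≤ D := hsum_diff j
  have hBd : |B - Bt| ≤ D := by
    rw [hB, hBt, tsumTail_eq hr, tsumTail_eq hrt]
    have : 1 - (∑ m ∈ Finset.range (j+1), r m) - (1 - ∑ m ∈ Finset.range (j+1), rt m)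
        = -((∑ m ∈ Finset.range (j+1), r m) - ∑ m ∈ Finset.range (j+1), rt m) := by ring
    rw [this, abs_neg]
    exact hsum_diff (j+1)
  have hxd : |x - xt| ≤ D := by
    have := Summable.le_tsum hd j (fun i _ => abs_nonneg _)
    exact this
  have hA0 : 0 ≤ A := Finset.sum_nonneg fun i _ => hr.1 i
  have hA1 : A ≤ 1 := hr.sum_range_le_one j
  have hAt0 : 0 ≤ At := Finset.sum_nonneg fun i _ => hrt.1 i
  have hAt1 : At ≤ 1 := hrt.sum_range_le_one j
  have hB0 : 0 ≤ B := tsum_nonneg fun m => hr.1 _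
  have hB1 : B ≤ 1 := by
    rw [hB, tsumTail_eq hr]
    have := Finset.sum_nonneg (fun i (_ : i ∈ Finset.range (j+1)) => hr.1 i)
    linarith
  have hBt0 : 0 ≤ Bt := tsum_nonneg fun m => hrt.1 _
  have hBt1 : Bt ≤ 1 := by
    rw [hBt, tsumTail_eq hrt]
    have := Finset.sum_nonneg (fun i (_ : i ∈ Finset.range (j+1)) => hrt.1 i)
    linarith
  have hx0 : 0 ≤ x := hr.1 j
  have hx1 : x ≤ 1 := hr.coord_le_one j
  have hxt0 : 0 ≤ xt := hrt.1 j
  have hxt1 : xt ≤ 1 := hrt.coord_le_one j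
  set T0 : ℝ := (k : ℝ) * (L : ℝ) * (|x - xt| + D * (x + xt)) with hT0
  have hT00 : 0 ≤ T0 := by positivity
  -- per-term bound
  have key : ∀ i₁ ∈ Finset.range k, ∀ i₂ ∈ Finset.Icc 1 (L - i₁),
      |A ^ i₁ / (i₁.factorial : ℝ) *
          ((min i₂ (k - i₁) : ℝ) * (x ^ i₂ / (i₂.factorial : ℝ)) *
            (B ^ (L - i₁ - i₂) / ((L - i₁ - i₂).factorial : ℝ))) -
        At ^ i₁ / (i₁.factorial : ℝ) *
          ((min i₂ (k - i₁) : ℝ) * (xt ^ i₂ / (i₂.factorial : ℝ)) *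
            (Bt ^ (L - i₁ - i₂) / ((L - i₁ - i₂).factorial : ℝ)))| ≤ T0 := by
    intro i₁ h₁ i₂ h₂
    obtain ⟨h₂1, h₂2⟩ := Finset.mem_Icc.mp h₂
    have hi₁ : i₁ < k := Finset.mem_range.mp h₁
    set c := L - i₁ - i₂ with hc
    set m : ℝ := (min i₂ (k - i₁) : ℝ) with hm
    have hik : (i₁ : ℝ) ≤ (k : ℝ) := by exact_mod_cast hi₁.le
    have hm0 : 0 ≤ m := le_min (by positivity) (by linarith)
    have hmk : m ≤ (k : ℝ) := by
      have := Nat.cast_nonneg (α := ℝ) i₁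
      exact (min_le_right _ _).trans (by linarith)
    set coef : ℝ := m / ((i₁.factorial : ℝ) * (i₂.factorial : ℝ) * (c.factorial : ℝ)) with hcoef
    have hfac1 : (1 : ℝ) ≤ (i₁.factorial : ℝ) * (i₂.factorial : ℝ) * (c.factorial : ℝ) := by
      have f1 : 1 ≤ i₁.factorial * i₂.factorial * c.factorial :=
        Nat.one_le_iff_ne_zero.mpr (Nat.pos_iff_ne_zero.mp
          (Nat.mul_pos (Nat.mul_pos i₁.factorial_pos i₂.factorial_pos) c.factorial_pos))
      exact_mod_cast f1
    have hcoef0 : 0 ≤ coef := by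
      apply div_nonneg hm0; linarith
    have hcoefk : coef ≤ (k : ℝ) :=
      (div_le_self hm0 hfac1).trans hmk
    have e1 : A ^ i₁ / (i₁.factorial : ℝ) *
          (m * (x ^ i₂ / (i₂.factorial : ℝ)) * (B ^ c / (c.factorial : ℝ))) -
        At ^ i₁ / (i₁.factorial : ℝ) *
          (m * (xt ^ i₂ / (i₂.factorial : ℝ)) * (Bt ^ c / (c.factorial : ℝ)))
        = coef * (A ^ i₁ * x ^ i₂ * B ^ c - At ^ i₁ * xt ^ i₂ * Bt ^ c) := by
      rw [hcoef]; ring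
    rw [e1, abs_mul, abs_of_nonneg hcoef0]
    have hP : |A ^ i₁ * x ^ i₂ * B ^ c - At ^ i₁ * xt ^ i₂ * Bt ^ c| ≤
        (L : ℝ) * (|x - xt| + D * (x + xt)) := by
      have h3 := aux_prod3 (A ^ i₁) (x ^ i₂) (B ^ c) (At ^ i₁) (xt ^ i₂) (Bt ^ c)
        (pow_nonneg hx0 _) (pow_nonneg hB0 _) (pow_nonneg hAt0 _) (pow_nonneg hxt0 _)
      have b1 : |A ^ i₁ - At ^ i₁| * (x ^ i₂ * B ^ c) ≤ ((L:ℝ) * D) * x := by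
        have e2 : |A ^ i₁ - At ^ i₁| ≤ (L:ℝ) * D := by
          calc |A ^ i₁ - At ^ i₁| ≤ i₁ * |A - At| := aux_pow_diff A At hA0 hA1 hAt0 hAt1 i₁
            _ ≤ (L:ℝ) * D := by
              apply mul_le_mul _ hAd (abs_nonneg _) (Nat.cast_nonneg _)
              exact_mod_cast le_of_lt (lt_of_lt_of_le hi₁ hkL)
        have e3 : x ^ i₂ * B ^ c ≤ x := by
          calc x ^ i₂ * B ^ c ≤ x ^ 1 * 1 := by
                apply mul_le_mul (pow_le_pow_of_le_one hx0 hx1 h₂1)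
                  (pow_le_one₀ hB0 hB1) (pow_nonneg hB0 _) (by positivity)
            _ = x := by ring
        exact mul_le_mul e2 e3 (by positivity) (by positivity)
      have b2 : |x ^ i₂ - xt ^ i₂| * (At ^ i₁ * B ^ c) ≤ (L:ℝ) * |x - xt| := by
        have e2 : |x ^ i₂ - xt ^ i₂| ≤ (L:ℝ) * |x - xt| := by
          calc |x ^ i₂ - xt ^ i₂| ≤ i₂ * |x - xt| := aux_pow_diff x xt hx0 hx1 hxt0 hxt1 i₂
            _ ≤ (L:ℝ) * |x - xt| := by
              apply mul_le_mul_of_nonneg_right _ (abs_nonneg _)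
              exact_mod_cast h₂2.trans (Nat.sub_le _ _)
        have e3 : At ^ i₁ * B ^ c ≤ 1 :=
          mul_le_one₀ (pow_le_one₀ hAt0 hAt1) (pow_nonneg hB0 _) (pow_le_one₀ hB0 hB1)
        calc |x ^ i₂ - xt ^ i₂| * (At ^ i₁ * B ^ c) ≤ ((L:ℝ) * |x - xt|) * 1 :=
              mul_le_mul e2 e3 (by positivity) (by positivity)
          _ = (L:ℝ) * |x - xt| := by ring
      have b3 : |B ^ c - Bt ^ c| * (At ^ i₁ * xt ^ i₂) ≤ ((L:ℝ) * D) * xt := by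
        have e2 : |B ^ c - Bt ^ c| ≤ (L:ℝ) * D := by
          calc |B ^ c - Bt ^ c| ≤ c * |B - Bt| := aux_pow_diff B Bt hB0 hB1 hBt0 hBt1 c
            _ ≤ (L:ℝ) * D := by
              apply mul_le_mul _ hBd (abs_nonneg _) (Nat.cast_nonneg _)
              exact_mod_cast (Nat.sub_le _ _).trans (Nat.sub_le _ _)
        have e3 : At ^ i₁ * xt ^ i₂ ≤ xt := by
          calc At ^ i₁ * xt ^ i₂ ≤ 1 * xt ^ 1 := by
                apply mul_le_mul (pow_le_one₀ hAt0 hAt1)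
                  (pow_le_pow_of_le_one hxt0 hxt1 h₂1) (pow_nonneg hxt0 _) zero_le_one
            _ = xt := by ring
        exact mul_le_mul e2 e3 (by positivity) (by positivity)
      calc |A ^ i₁ * x ^ i₂ * B ^ c - At ^ i₁ * xt ^ i₂ * Bt ^ c| ≤ _ := h3
        _ ≤ ((L:ℝ) * D) * x + (L:ℝ) * |x - xt| + ((L:ℝ) * D) * xt := by
            exact add_le_add (add_le_add b1 b2) b3
        _ = (L : ℝ) * (|x - xt| + D * (x + xt)) := by ring
    calc coef * |A ^ i₁ * x ^ i₂ * B ^ c - At ^ i₁ * xt ^ i₂ * Bt ^ c| ≤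
          (k:ℝ) * ((L : ℝ) * (|x - xt| + D * (x + xt))) := by
          apply mul_le_mul hcoefk hP (abs_nonneg _) (Nat.cast_nonneg _)
      _ = T0 := by rw [hT0]; ring
  -- assemble the double sum
  have hsplit : zbar L k j r - zbar L k j rt =
      ∑ i₁ ∈ Finset.range k, ∑ i₂ ∈ Finset.Icc 1 (L - i₁),
        (A ^ i₁ / (i₁.factorial : ℝ) *
            ((min i₂ (k - i₁) : ℝ) * (x ^ i₂ / (i₂.factorial : ℝ)) *
              (B ^ (L - i₁ - i₂) / ((L - i₁ - i₂).factorial : ℝ))) -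
          At ^ i₁ / (i₁.factorial : ℝ) *
            ((min i₂ (k - i₁) : ℝ) * (xt ^ i₂ / (i₂.factorial : ℝ)) *
              (Bt ^ (L - i₁ - i₂) / ((L - i₁ - i₂).factorial : ℝ)))) := by
    unfold zbar
    rw [← Finset.sum_sub_distrib]
    refine Finset.sum_congr rfl fun i₁ _ => ?_
    rw [Finset.mul_sum, Finset.mul_sum, ← Finset.sum_sub_distrib]
  rw [hsplit]
  calc |∑ i₁ ∈ Finset.range k, ∑ i₂ ∈ Finset.Icc 1 (L - i₁), _| ≤
        ∑ i₁ ∈ Finset.range k, ∑ i₂ ∈ Finset.Icc 1 (L - i₁), T0 := by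
        refine (Finset.abs_sum_le_sum_abs _ _).trans (Finset.sum_le_sum fun i₁ h₁ => ?_)
        exact (Finset.abs_sum_le_sum_abs _ _).trans
          (Finset.sum_le_sum fun i₂ h₂ => key i₁ h₁ i₂ h₂)
    _ ≤ ∑ i₁ ∈ Finset.range k, (L : ℝ) * T0 := by
        refine Finset.sum_le_sum fun i₁ _ => ?_
        rw [Finset.sum_const, Nat.card_Icc, Nat.add_sub_cancel, nsmul_eq_mul]
        apply mul_le_mul_of_nonneg_right _ hT00
        exact_mod_cast Nat.sub_le L i₁
    _ = (k : ℝ) * ((L : ℝ) * T0) := by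
        rw [Finset.sum_const, Finset.card_range, nsmul_eq_mul]
    _ = (k : ℝ)^2 * (L : ℝ)^2 * (|x - xt| + D * (x + xt)) := by rw [hT0]; ring

lemma abs_sub_le_abs_add_abs (a b : ℝ) : |a - b| ≤ |a| + |b| := by
  calc |a - b| = |a + -b| := by rw [sub_eq_add_neg]
    _ ≤ |a| + |-b| := abs_add_le _ _
    _ = |a| + |b| := by rw [abs_neg]

/-- `F` is Lipschitz from `𝒮` to `ℓ¹`: there is `C₁ ∈ (0,∞)` (depending only
on `L`, `k`, `λ`) with `‖F(r) − F(r̃)‖₁ ≤ C₁‖r − r̃‖₁` for all `r, r̃ ∈ 𝒮`. -/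
theorem Fmap_lipschitz_l1 (L k : ℕ) (hL : 1 ≤ L) (hk : 1 ≤ k) (hkL : k ≤ L)
    (lam : ℝ) (hlam : 0 < lam) :
    ∃ C : ℝ, 0 < C ∧ ∀ r rt : ℕ → ℝ, memS r → memS rt →
      (∑' j, |Fmap L k lam r j - Fmap L k lam rt j|) ≤ C * ∑' j, |r j - rt j| := by
  have hfac : (0:ℝ) < (L.factorial : ℝ) := by exact_mod_cast L.factorial_pos
  have hkR : (0:ℝ) < (k:ℝ) := by exact_mod_cast hk
  have hLR : (0:ℝ) < (L:ℝ) := by exact_mod_cast hL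
  refine ⟨lam * (L.factorial : ℝ) * (9 * (k:ℝ)^2 * (L:ℝ)^2) + 2 * (k:ℝ), ?_, ?_⟩
  · have h1 : (0:ℝ) < lam * (L.factorial : ℝ) * (9 * (k:ℝ)^2 * (L:ℝ)^2) :=
      mul_pos (mul_pos hlam hfac)
        (mul_pos (mul_pos (by norm_num) (pow_pos hkR 2)) (pow_pos hLR 2))
    linarith
  intro r rt hr hrt
  set d : ℕ → ℝ := fun i => |r i - rt i| with hdDef
  have hd : Summable d := (hr.2.1.sub hrt.2.1).abs
  set D := ∑' i, d i with hDdef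
  have hD0 : 0 ≤ D := tsum_nonneg fun _ => abs_nonneg _
  set H : ℕ → ℝ := fun j => (k:ℝ)^2 * (L:ℝ)^2 * (d j + D * (r j + rt j)) with hHdef
  have hHnn : ∀ j, 0 ≤ H j := by
    intro j
    have := hr.1 j; have := hrt.1 j; have := abs_nonneg (r j - rt j)
    apply mul_nonneg (by positivity)
    have : 0 ≤ d j := abs_nonneg _
    nlinarith
  have hHs : Summable H := (hd.add ((hr.2.1.add hrt.2.1).mul_left D)).mul_left _
  have hH' : Summable (fun j => H (j - 1)) := by
    rw [← summable_nat_add_iff 1]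
    simpa using hHs
  have hd' : Summable (fun j => d (j + 1)) := (summable_nat_add_iff 1).mpr hd
  have hzd : ∀ j, |zbar L k j r - zbar L k j rt| ≤ H j := fun j =>
    zbar_diff L k hk hkL j r rt hr hrt
  set E : ℕ → ℝ := fun j =>
    lam * (L.factorial : ℝ) * (H (j - 1) + H j) + (k:ℝ) * (d (j + 1) + d j) with hEdef
  have hEs : Summable E := ((hH'.add hHs).mul_left _).add ((hd'.add hd).mul_left _)
  have hFE : ∀ j, |Fmap L k lam r j - Fmap L k lam rt j| ≤ E j := by
    intro j
    have hlf : 0 ≤ lam * (L.factorial : ℝ) := le_of_lt (mul_pos hlam hfac)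
    cases j with
    | zero =>
        have e : Fmap L k lam r 0 - Fmap L k lam rt 0 =
            -(lam * (L.factorial : ℝ)) * (zbar L k 0 r - zbar L k 0 rt) +
              (k:ℝ) * (r 1 - rt 1) := by
          simp only [Fmap]; ring
        calc |Fmap L k lam r 0 - Fmap L k lam rt 0|
            ≤ |(-(lam * (L.factorial : ℝ))) * (zbar L k 0 r - zbar L k 0 rt)| +
              |(k:ℝ) * (r 1 - rt 1)| := by rw [e]; exact abs_add_le _ _
          _ = lam * (L.factorial : ℝ) * |zbar L k 0 r - zbar L k 0 rt| +
              (k:ℝ) * d 1 := by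
              rw [abs_mul, abs_mul, abs_neg, abs_of_nonneg hlf, abs_of_nonneg hkR.le]
          _ ≤ lam * (L.factorial : ℝ) * (H (0 - 1) + H 0) + (k:ℝ) * (d 1 + d 0) := by
              have h1 := hzd 0
              have h2 := hHnn (0 - 1)
              have h3 : 0 ≤ d 0 := abs_nonneg _
              nlinarith
          _ = E 0 := rfl
    | succ j =>
        have e : Fmap L k lam r (j+1) - Fmap L k lam rt (j+1) =
            lam * (L.factorial : ℝ) * ((zbar L k j r - zbar L k j rt) -
              (zbar L k (j+1) r - zbar L k (j+1) rt)) +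
              (k:ℝ) * ((r (j+2) - rt (j+2)) - (r (j+1) - rt (j+1))) := by
          simp only [Fmap]; ring
        calc |Fmap L k lam r (j+1) - Fmap L k lam rt (j+1)|
            ≤ |lam * (L.factorial : ℝ) * ((zbar L k j r - zbar L k j rt) -
                (zbar L k (j+1) r - zbar L k (j+1) rt))| +
              |(k:ℝ) * ((r (j+2) - rt (j+2)) - (r (j+1) - rt (j+1)))| := by
              rw [e]; exact abs_add_le _ _
          _ ≤ lam * (L.factorial : ℝ) * (|zbar L k j r - zbar L k j rt| +
                |zbar L k (j+1) r - zbar L k (j+1) rt|) +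
              (k:ℝ) * (d (j+2) + d (j+1)) := by
              simp only [abs_mul]
              rw [abs_of_nonneg hlam.le, abs_of_nonneg hfac.le, abs_of_nonneg hkR.le]
              have t1 := abs_sub_le_abs_add_abs (zbar L k j r - zbar L k j rt)
                (zbar L k (j+1) r - zbar L k (j+1) rt)
              have t2 := abs_sub_le_abs_add_abs (r (j+2) - rt (j+2)) (r (j+1) - rt (j+1))
              have : d (j+2) = |r (j+2) - rt (j+2)| := rfl
              have : d (j+1) = |r (j+1) - rt (j+1)| := rfl
              nlinarith [abs_nonneg ((r (j+2) - rt (j+2)) - (r (j+1) - rt (j+1)))]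
          _ ≤ E (j+1) := by
              have h1 := hzd j
              have h2 := hzd (j+1)
              have hsimp : (j + 1 : ℕ) - 1 = j := rfl
              show _ ≤ lam * (L.factorial : ℝ) * (H ((j+1) - 1) + H (j+1)) +
                (k:ℝ) * (d ((j+1) + 1) + d (j+1))
              rw [hsimp]
              have := abs_nonneg (zbar L k j r - zbar L k j rt)
              nlinarith
  have hFs : Summable (fun j => |Fmap L k lam r j - Fmap L k lam rt j|) :=
    Summable.of_nonneg_of_le (fun _ => abs_nonneg _) hFE hEs
  have S1eq : ∑' j, H (j - 1) = H 0 + ∑' j, H j := by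
    rw [Summable.tsum_eq_zero_add hH']
    simp
  have hH0le : H 0 ≤ ∑' j, H j := Summable.le_tsum hHs 0 fun i _ => hHnn i
  have SHval : ∑' j, H j = (k:ℝ)^2 * (L:ℝ)^2 * (D + D * 2) := by
    calc ∑' j, H j = (k:ℝ)^2 * (L:ℝ)^2 * ∑' j, (d j + D * (r j + rt j)) := tsum_mul_left
      _ = (k:ℝ)^2 * (L:ℝ)^2 * (D + D * 2) := by
          rw [Summable.tsum_add hd ((hr.2.1.add hrt.2.1).mul_left D), tsum_mul_left,
            Summable.tsum_add hr.2.1 hrt.2.1, hr.2.2, hrt.2.2]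
          norm_num
          exact Or.inl rfl
  have S3le : ∑' j, d (j + 1) ≤ D := by
    have h := Summable.tsum_eq_zero_add hd
    have h0 : 0 ≤ d 0 := abs_nonneg _
    rw [hDdef]
    linarith [h ▸ le_refl (∑' i, d i)]
  have hEt : ∑' j, E j = lam * (L.factorial : ℝ) * ((∑' j, H (j - 1)) + ∑' j, H j) +
      (k:ℝ) * ((∑' j, d (j + 1)) + D) := by
    rw [hEdef]
    rw [Summable.tsum_add ((hH'.add hHs).mul_left _) ((hd'.add hd).mul_left _),
      tsum_mul_left, tsum_mul_left, Summable.tsum_add hH' hHs, Summable.tsum_add hd' hd]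
  calc (∑' j, |Fmap L k lam r j - Fmap L k lam rt j|) ≤ ∑' j, E j :=
        Summable.tsum_le_tsum hFE hFs hEs
    _ = lam * (L.factorial : ℝ) * ((∑' j, H (j - 1)) + ∑' j, H j) +
        (k:ℝ) * ((∑' j, d (j + 1)) + D) := hEt
    _ ≤ lam * (L.factorial : ℝ) * (((∑' j, H j) + ∑' j, H j) + ∑' j, H j) +
        (k:ℝ) * (D + D) := by
        rw [S1eq]
        gcongr
    _ = (lam * (L.factorial : ℝ) * (9 * (k:ℝ)^2 * (L:ℝ)^2) + 2 * (k:ℝ)) * D := by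
        rw [SHval]; ring
    _ = (lam * (L.factorial : ℝ) * (9 * (k:ℝ)^2 * (L:ℝ)^2) + 2 * (k:ℝ)) *
        ∑' j, |r j - rt j| := rfl
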